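/- Let n ≥ 3, |ψ⟩ = (1/√2)(|0⋯0⟩ + |1⋯1⟩) the n-qubit GHZ state, and suppose U = g_1⊗⋯⊗g_n with all g_k diagonal unitaries, g_k = λ_k diag(e^{it_k}, e^{-it_k}), satisfies U|ψ⟩⟨ψ|U† = |ψ⟩⟨ψ|. Then Σ_k t_k is an integer multiple of π. -/

import Mathlib

open Matrix Complex
open scoped ComplexOrder

noncomputable section

/-- Tensor (Kronecker) product of `n` local 2×2 operators, acting on `(ℂ²)^{⊗n}`
indexed by binary strings `Fin n → Fin 2`. -/
def tensorLocal {n : ℕ} (g : Fin n → Matrix (Fin 2) (Fin 2) ℂ) :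
    Matrix (Fin n → Fin 2) (Fin n → Fin 2) ℂ :=
  Matrix.of fun I J => ∏ i, g i (I i) (J i)

/-- Unitary permuting the tensor factors of `(ℂ²)^{⊗n}`. -/
def permMatrix {n : ℕ} (π : Equiv.Perm (Fin n)) :
    Matrix (Fin n → Fin 2) (Fin n → Fin 2) ℂ :=
  Matrix.of fun I J => if (∀ i, I i = J (π i)) then 1 else 0

/-- A state is symmetric if it is invariant under conjugation by all
tensor-factor permutations. -/
def SymmetricState {n : ℕ} (ρ : Matrix (Fin n → Fin 2) (Fin n → Fin 2) ℂ) : Prop :=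
  ∀ π : Equiv.Perm (Fin n), permMatrix π * ρ * (permMatrix π)ᴴ = ρ

/-- Bit complement. -/
def flipBit : Fin 2 → Fin 2 := fun x => if x = 0 then 1 else 0

/-- `exp(-itZ/2) = diag(e^{-it/2}, e^{it/2})`. -/
def expZ (t : ℝ) : Matrix (Fin 2) (Fin 2) ℂ :=
  Matrix.diagonal ![Complex.exp (-(Complex.I * t) / 2), Complex.exp (Complex.I * t / 2)]

/-- `diag(e^{it}, e^{-it})`. -/
def diagZ (t : ℝ) : Matrix (Fin 2) (Fin 2) ℂ :=
  Matrix.diagonal ![Complex.exp (Complex.I * t), Complex.exp (-(Complex.I * t))]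

/-- Pauli X. -/
def X2 : Matrix (Fin 2) (Fin 2) ℂ := !![0, 1; 1, 0]

/-- Matrix unit `|I⟩⟨J|`. -/
def matUnit {n : ℕ} (I J : Fin n → Fin 2) :
    Matrix (Fin n → Fin 2) (Fin n → Fin 2) ℂ :=
  Matrix.single I J 1

/-- Density matrix: positive semidefinite with trace 1. -/
def IsDensityMatrix {n : ℕ} (ρ : Matrix (Fin n → Fin 2) (Fin n → Fin 2) ℂ) : Prop :=
  ρ.PosSemidef ∧ ρ.trace = 1

/-- Projector `|ψ⟩⟨ψ|` of a (not necessarily normalized) state vector. -/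
def projector {n : ℕ} (ψ : (Fin n → Fin 2) → ℂ) :
    Matrix (Fin n → Fin 2) (Fin n → Fin 2) ℂ :=
  Matrix.of fun I J => ψ I * (starRingEnd ℂ) (ψ J)

/-- The n-qubit GHZ state vector `(|0⋯0⟩+|1⋯1⟩)/√2`. -/
def ghz (n : ℕ) : (Fin n → Fin 2) → ℂ := fun I =>
  if I = (fun _ => 0) then ((1 / Real.sqrt 2 : ℝ) : ℂ)
  else if I = (fun _ => 1) then ((1 / Real.sqrt 2 : ℝ) : ℂ) else 0

/-- The Dicke state `|D_n^{(k)}⟩`. -/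
def dicke (n k : ℕ) : (Fin n → Fin 2) → ℂ := fun I =>
  if (∑ i, (I i : ℕ)) = k then ((1 / Real.sqrt (n.choose k) : ℝ) : ℂ) else 0

/-- The singlet state `(|01⟩ - |10⟩)/√2`. -/
def singlet : (Fin 2 → Fin 2) → ℂ := fun I =>
  if I 0 = 0 ∧ I 1 = 1 then ((1 / Real.sqrt 2 : ℝ) : ℂ)
  else if I 0 = 1 ∧ I 1 = 0 then -((1 / Real.sqrt 2 : ℝ) : ℂ) else 0

/-- Unnormalized symmetrization of `n` one-qubit states. -/
def symmetrization {n : ℕ} (ψs : Fin n → (Fin 2 → ℂ)) : (Fin n → Fin 2) → ℂ :=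
  fun I => ∑ π : Equiv.Perm (Fin n), ∏ i, ψs (π i) (I i)

/-- The 1-qubit reduced density matrix at position `j` (partial trace over the
other factors). -/
def reduced1 {n : ℕ} (ρ : Matrix (Fin n → Fin 2) (Fin n → Fin 2) ℂ) (j : Fin n) :
    Matrix (Fin 2) (Fin 2) ℂ :=
  Matrix.of fun x y => ∑ I : Fin n → Fin 2,
    if I j = x then ρ I (Function.update I j y) else 0

/- The local unitary is diagonal, `U = diag(d)`, so the stabilizer condition reads
`d I * conj (d J) * ψ I * conj (ψ J) = ψ I * conj (ψ J)`. For `I, J` in the support `{0⋯0, 1⋯1}`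
of the GHZ state this gives `d I * conj (d J) = 1`, hence `|d (0⋯0)| = 1` and
`d (0⋯0) = d (1⋯1)`, i.e. `Λ e^{iT} = Λ e^{-iT}` with `Λ = ∏ λ_k ≠ 0` and `T = ∑ t_k`.
So `e^{2iT} = 1`. -/

theorem tensorLocal_diagonal {n : ℕ} (v : Fin n → Fin 2 → ℂ) :
    tensorLocal (fun k => diagonal (v k)) = diagonal fun I => ∏ k, v k (I k) := by
  ext I J
  by_cases hIJ : I = J
  · subst hIJ
    simp [tensorLocal]
  · obtain ⟨k, hk⟩ := Function.ne_iff.mp hIJ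
    rw [diagonal_apply_ne _ hIJ, tensorLocal, of_apply]
    exact Finset.prod_eq_zero (Finset.mem_univ k) (diagonal_apply_ne _ hk)

theorem smul_diagZ (c : ℂ) (t : ℝ) :
    c • diagZ t = diagonal ![c * exp (I * t), c * exp (-(I * t))] := by
  rw [diagZ, ← diagonal_smul]
  congr 1
  ext b
  fin_cases b <;> rfl

theorem diagonal_mul_mul_conjTranspose_apply {ι α : Type*} [Fintype ι] [DecidableEq ι]
    [CommRing α] [StarRing α] (d : ι → α) (A : Matrix ι ι α) (i j : ι) :
    (diagonal d * A * (diagonal d)ᴴ) i j = d i * A i j * star (d j) := by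
  rw [diagonal_conjTranspose, mul_diagonal, diagonal_mul, Pi.star_apply]

theorem projector_apply {n : ℕ} (ψ : (Fin n → Fin 2) → ℂ) (I J : Fin n → Fin 2) :
    projector ψ I J = ψ I * star (ψ J) := rfl

theorem eq_of_diagonal_stabilizes_projector {n : ℕ} {d : (Fin n → Fin 2) → ℂ}
    {ψ : (Fin n → Fin 2) → ℂ}
    (hstab : diagonal d * projector ψ * (diagonal d)ᴴ = projector ψ)
    {I J : Fin n → Fin 2} (hI : ψ I ≠ 0) (hJ : ψ J ≠ 0) :
    d I ≠ 0 ∧ d I = d J := by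
  have entry : ∀ K, d I * star (d K) * (ψ I * star (ψ K)) = ψ I * star (ψ K) := fun K => by
    have h := congrFun (congrFun hstab I) K
    rw [diagonal_mul_mul_conjTranspose_apply, projector_apply] at h
    linear_combination h
  have hII : d I * star (d I) = 1 :=
    mul_right_cancel₀ (mul_ne_zero hI (star_ne_zero.mpr hI)) ((entry I).trans (one_mul _).symm)
  have hIJ : d I * star (d J) = 1 :=
    mul_right_cancel₀ (mul_ne_zero hI (star_ne_zero.mpr hJ)) ((entry J).trans (one_mul _).symm)
  have hdI : d I ≠ 0 := left_ne_zero_of_mul_eq_one hII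
  exact ⟨hdI, star_injective (mul_left_cancel₀ hdI (hII.trans hIJ.symm))⟩

theorem ghz_const_ne_zero (n : ℕ) (b : Fin 2) : ghz n (fun _ => b) ≠ 0 := by
  have h : ((1 / Real.sqrt 2 : ℝ) : ℂ) ≠ 0 := by
    exact_mod_cast (by positivity : (1 / Real.sqrt 2 : ℝ) ≠ 0)
  unfold ghz
  split_ifs with h0 h1
  · exact h
  · exact h
  · fin_cases b
    exacts [absurd rfl h0, absurd rfl h1]

theorem prod_mul_exp_mul_I {ι : Type*} (s : Finset ι) (c : ι → ℂ) (t : ι → ℝ) :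
    ∏ k ∈ s, c k * exp (I * t k) = (∏ k ∈ s, c k) * exp (I * ↑(∑ k ∈ s, t k)) := by
  rw [Finset.prod_mul_distrib, ofReal_sum, Finset.mul_sum, exp_sum]

theorem exists_int_mul_pi_of_exp_mul_I_eq_exp_neg {T : ℝ} (h : exp (I * T) = exp (-(I * T))) :
    ∃ m : ℤ, T = m * Real.pi := by
  obtain ⟨m, hm⟩ := exp_eq_exp_iff_exists_int.mp h
  refine ⟨m, ?_⟩
  have hT : ((2 * T : ℝ) : ℂ) * I = ((m * (2 * Real.pi) : ℝ) : ℂ) * I := by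
    push_cast
    linear_combination hm
  have := ofReal_injective (mul_right_cancel₀ I_ne_zero hT)
  linarith

theorem ghz_diagonal_stabilizer_phase_sum_general {n : ℕ}
    (g : Fin n → Matrix (Fin 2) (Fin 2) ℂ) (lam : Fin n → ℂ) (t : Fin n → ℝ)
    (hgk : ∀ k, g k = lam k • diagZ (t k))
    (hstab : tensorLocal g * projector (ghz n) * (tensorLocal g)ᴴ = projector (ghz n)) :
    ∃ m : ℤ, ∑ k, t k = m * Real.pi := by
  have hg : g = fun k => diagonal ![lam k * exp (I * t k), lam k * exp (-(I * t k))] := by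
    funext k
    rw [hgk, smul_diagZ]
  rw [hg, tensorLocal_diagonal] at hstab
  obtain ⟨hd0, hd01⟩ := eq_of_diagonal_stabilizes_projector hstab
    (ghz_const_ne_zero n 0) (ghz_const_ne_zero n 1)
  have hneg : ∀ k, -(I * t k) = I * ↑(-t k) := fun k => by push_cast; ring
  simp only [Matrix.cons_val_zero, Matrix.cons_val_one, hneg, prod_mul_exp_mul_I,
    Finset.sum_neg_distrib] at hd0 hd01
  apply exists_int_mul_pi_of_exp_mul_I_eq_exp_neg
  rw [ofReal_neg, mul_neg] at hd01
  exact mul_left_cancel₀ (left_ne_zero_of_mul hd0) hd01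

/-- A diagonal local unitary stabilizing the GHZ projector has phase angles
summing to an integer multiple of `π`. -/
theorem ghz_diagonal_stabilizer_phase_sum {n : ℕ} (hn : 3 ≤ n)
    (g : Fin n → Matrix (Fin 2) (Fin 2) ℂ) (lam : Fin n → ℂ) (t : Fin n → ℝ)
    (hlam : ∀ k, ‖lam k‖ = 1)
    (hgk : ∀ k, g k = lam k • diagZ (t k))
    (hstab : tensorLocal g * projector (ghz n) * (tensorLocal g)ᴴ = projector (ghz n)) :
    ∃ m : ℤ, ∑ k, t k = m * Real.pi :=
  ghz_diagonal_stabilizer_phase_sum_general g lam t hgk hstab
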